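/- The θ-digraph θ(a,b,c) has complementarity spectrum {0, 1, ρ(θ(a,b,c))}, where ρ(θ(a,b,c)) > 1; in particular it has exactly three complementarity eigenvalues. -/

import Mathlib

open Matrix
open scoped Classical

noncomputable section

/-- Adjacency matrix of a digraph given by an arc relation `E`. -/
def adjMat {V : Type*} (E : V → V → Prop) : Matrix V V ℝ :=
  Matrix.of fun i j => if E i j then (1 : ℝ) else 0

/-- Spectral radius of a real square matrix: the largest modulus of a (complex) eigenvalue. -/
def matSpecRad {n : Type*} [Fintype n] (A : Matrix n n ℝ) : ℝ :=
  sSup {r : ℝ | ∃ μ ∈ spectrum ℂ (A.map (fun x => (x : ℂ))), r = ‖μ‖}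

/-- Spectral radius of a digraph. -/
def rho {V : Type*} [Fintype V] (E : V → V → Prop) : ℝ :=
  matSpecRad (adjMat E)

/-- The complementarity spectrum of a real square matrix. -/
def compSpec {n : Type*} [Fintype n] (A : Matrix n n ℝ) : Set ℝ :=
  {lam | ∃ x : n → ℝ, x ≠ 0 ∧ 0 ≤ x ∧ 0 ≤ A.mulVec x - lam • x ∧
    x ⬝ᵥ (A.mulVec x - lam • x) = 0}

/-- Reachability by directed paths. -/
def Reach {V : Type*} (E : V → V → Prop) : V → V → Prop :=
  Relation.ReflTransGen E

/-- A digraph is strongly connected if every vertex reaches every other one. -/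
def StronglyConnected {V : Type*} (E : V → V → Prop) : Prop :=
  ∀ u v, Reach E u v

/-- Induced subdigraph on a vertex subset `S`. -/
def induceRel {V : Type*} (E : V → V → Prop) (S : Set V) : S → S → Prop :=
  fun a b => E a.1 b.1

/-- Spectral radius of the induced subdigraph on `S`. -/
def specRadOn {V : Type*} [Fintype V] (E : V → V → Prop) (S : Set V) : ℝ :=
  @rho S (Set.Finite.fintype S.toFinite) (induceRel E S)

/-- Complementarity spectrum of the induced subdigraph on `S`. -/
def compSpecOn {V : Type*} [Fintype V] (E : V → V → Prop) (S : Set V) : Set ℝ :=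
  @compSpec S (Set.Finite.fintype S.toFinite) (adjMat (induceRel E S))

/-- Isomorphism of digraphs. -/
def IsoDigraph {V W : Type*} (E : V → V → Prop) (F : W → W → Prop) : Prop :=
  ∃ e : V ≃ W, ∀ a b, E a b ↔ F (e a) (e b)

/-- The directed cycle on `n` vertices. -/
def cycleRel (n : ℕ) : ZMod n → ZMod n → Prop := fun i j => j = i + 1

/-- A digraph is a directed cycle if it is isomorphic to some `C⃗_n`, `n ≥ 2`. -/
def IsCycleDigraph {V : Type*} (E : V → V → Prop) : Prop :=
  ∃ n : ℕ, 2 ≤ n ∧ IsoDigraph E (cycleRel n)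

/-- A digraph is acyclic if it has no directed cycle. -/
def Acyclic {V : Type*} (E : V → V → Prop) : Prop :=
  ∀ v, ¬ Relation.TransGen E v v

/-- Strongly connected component of the vertex `v`. -/
def component {V : Type*} (E : V → V → Prop) (v : V) : Set V :=
  {u | Reach E u v ∧ Reach E v u}

/-- `D` has an `∞(r,s)`-subdigraph: two directed cycles of lengths `r` and `s`
sharing exactly one vertex, all of whose arcs are arcs of `D`. -/
def InftySub {V : Type*} (E : V → V → Prop) (r s : ℕ) : Prop :=
  ∃ (f : ZMod r → V) (g : ZMod s → V),
    Function.Injective f ∧ Function.Injective g ∧ f 0 = g 0 ∧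
    Set.range f ∩ Set.range g = {f 0} ∧
    (∀ i, E (f i) (f (i + 1))) ∧ (∀ j, E (g j) (g (j + 1)))

/-- `D` has a `θ(a,b,c)`-subdigraph: three internally disjoint directed paths,
two from `v` to `w` (of lengths `a+1` and `b+1`) and one from `w` to `v`
(of length `c+1`), all of whose arcs are arcs of `D`. -/
def ThetaSub {V : Type*} (E : V → V → Prop) (a b c : ℕ) : Prop :=
  ∃ (P : Fin (a + 2) → V) (Q : Fin (b + 2) → V) (R : Fin (c + 2) → V),
    Function.Injective P ∧ Function.Injective Q ∧ Function.Injective R ∧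
    P 0 = Q 0 ∧ Q 0 = R (Fin.last (c + 1)) ∧
    P (Fin.last (a + 1)) = Q (Fin.last (b + 1)) ∧ Q (Fin.last (b + 1)) = R 0 ∧
    (∀ i j, P i = Q j → (i = 0 ∧ j = 0) ∨ (i = Fin.last (a + 1) ∧ j = Fin.last (b + 1))) ∧
    (∀ i j, P i = R j → (i = 0 ∧ j = Fin.last (c + 1)) ∨ (i = Fin.last (a + 1) ∧ j = 0)) ∧
    (∀ i j, Q i = R j → (i = 0 ∧ j = Fin.last (c + 1)) ∨ (i = Fin.last (b + 1) ∧ j = 0)) ∧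
    (∀ i : Fin (a + 1), E (P i.castSucc) (P i.succ)) ∧
    (∀ i : Fin (b + 1), E (Q i.castSucc) (Q i.succ)) ∧
    (∀ i : Fin (c + 1), E (R i.castSucc) (R i.succ))

/-- `D` is (isomorphic to) the `∞(r,s)` digraph: the coalescence of the directed
cycles `C⃗_r` and `C⃗_s` at one vertex, with no further vertices or arcs. -/
def IsInftyDigraph {V : Type*} (E : V → V → Prop) (r s : ℕ) : Prop :=
  ∃ (f : ZMod r → V) (g : ZMod s → V),
    Function.Injective f ∧ Function.Injective g ∧ f 0 = g 0 ∧
    Set.range f ∩ Set.range g = {f 0} ∧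
    Set.range f ∪ Set.range g = Set.univ ∧
    ∀ u v, E u v ↔ ((∃ i, u = f i ∧ v = f (i + 1)) ∨ (∃ j, u = g j ∧ v = g (j + 1)))

/-- `D` is (isomorphic to) the `θ(a,b,c)` digraph: three internally disjoint
directed paths, two from `v` to `w` and one from `w` to `v`, with no further
vertices or arcs. -/
def IsThetaDigraph {V : Type*} (E : V → V → Prop) (a b c : ℕ) : Prop :=
  ∃ (P : Fin (a + 2) → V) (Q : Fin (b + 2) → V) (R : Fin (c + 2) → V),
    Function.Injective P ∧ Function.Injective Q ∧ Function.Injective R ∧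
    P 0 = Q 0 ∧ Q 0 = R (Fin.last (c + 1)) ∧
    P (Fin.last (a + 1)) = Q (Fin.last (b + 1)) ∧ Q (Fin.last (b + 1)) = R 0 ∧
    (∀ i j, P i = Q j → (i = 0 ∧ j = 0) ∨ (i = Fin.last (a + 1) ∧ j = Fin.last (b + 1))) ∧
    (∀ i j, P i = R j → (i = 0 ∧ j = Fin.last (c + 1)) ∨ (i = Fin.last (a + 1) ∧ j = 0)) ∧
    (∀ i j, Q i = R j → (i = 0 ∧ j = Fin.last (c + 1)) ∨ (i = Fin.last (b + 1) ∧ j = 0)) ∧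
    Set.range P ∪ Set.range Q ∪ Set.range R = Set.univ ∧
    (∀ u v, E u v ↔
      ((∃ i : Fin (a + 1), u = P i.castSucc ∧ v = P i.succ) ∨
       (∃ i : Fin (b + 1), u = Q i.castSucc ∧ v = Q i.succ) ∨
       (∃ i : Fin (c + 1), u = R i.castSucc ∧ v = R i.succ)))

/-!
Every vertex of `θ(a,b,c)` except the common source `v` of the two parallel paths has exactly
one out-neighbour. If `(λ, x)` is a complementarity eigenpair with `λ > 0`, complementarity
gives `x(w) = λ x(u)` for the out-neighbour `w` of every `u ≠ v` in the support of `x`. If the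
support is closed under arcs, strong connectivity makes `x` a positive eigenvector and the
Collatz–Wielandt comparison gives `λ = ρ`. Otherwise the support is left only at `v`, so every
vertex of the support has an out-neighbour on which `x` is multiplied by `λ`; following these
through the finitely many vertices forces `λ = 1`. Conversely `0`, `1` and `ρ` are witnessed by
the indicator of `v`, the indicator of the cycle formed by the paths `P` and `R`, and the
explicit Perron vector `x(Pᵢ) = ρ^(b+i)`, `x(Qᵢ) = ρ^(a+i)`, `x(Rⱼ) = ρ^(a+b+1+j)`, where
`ρ^(a+b+c+2) = ρ^a + ρ^b`.
-/

section NonnegMatrix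

variable {n : Type*} [Fintype n]

theorem mem_spectrum_iff_exists_mulVec_eq_smul {K : Type*} [Field K] (A : Matrix n n K) (μ : K) :
    μ ∈ spectrum K A ↔ ∃ y, y ≠ 0 ∧ A *ᵥ y = μ • y := by
  rw [← Matrix.spectrum_toLin', ← Module.End.hasEigenvalue_iff_mem_spectrum]
  constructor
  · intro h
    obtain ⟨y, hy⟩ := h.exists_hasEigenvector
    exact ⟨y, hy.2, hy.apply_eq_smul⟩
  · rintro ⟨y, hy0, hy⟩
    exact Module.End.hasEigenvalue_of_hasEigenvector ⟨Module.End.mem_eigenspace_iff.2 hy, hy0⟩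

theorem mulVec_nonneg {A : Matrix n n ℝ} (hA : ∀ i j, 0 ≤ A i j) {x : n → ℝ} (hx : 0 ≤ x) :
    0 ≤ A *ᵥ x :=
  fun i => Finset.sum_nonneg fun j _ => mul_nonneg (hA i j) (hx j)

/-- Collatz–Wielandt comparison with a positive eigenvector. -/
theorem le_of_smul_le_mulVec {A : Matrix n n ℝ} (hA : ∀ i j, 0 ≤ A i j) {x : n → ℝ}
    (hx : ∀ i, 0 < x i) {r : ℝ} (hAx : A *ᵥ x = r • x) {z : n → ℝ} (hz : ∃ i, 0 < z i)
    {s : ℝ} (hsz : ∀ i, s * z i ≤ (A *ᵥ z) i) : s ≤ r := by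
  obtain ⟨i₁, hi₁⟩ := hz
  obtain ⟨i₀, -, hmax⟩ :=
    Finset.exists_max_image Finset.univ (fun i => z i / x i) ⟨i₁, Finset.mem_univ _⟩
  set t := z i₀ / x i₀
  have ht : 0 < t := (div_pos hi₁ (hx i₁)).trans_le (hmax i₁ (Finset.mem_univ _))
  have hzt : ∀ j, z j ≤ t * x j := fun j => (div_le_iff₀ (hx j)).1 (hmax j (Finset.mem_univ _))
  have hzi₀ : z i₀ = t * x i₀ := (div_mul_cancel₀ _ (hx i₀).ne').symm
  have key : s * (t * x i₀) ≤ r * (t * x i₀) :=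
    calc s * (t * x i₀) = s * z i₀ := by rw [hzi₀]
      _ ≤ (A *ᵥ z) i₀ := hsz i₀
      _ ≤ (A *ᵥ (t • x)) i₀ :=
        Finset.sum_le_sum fun j _ => mul_le_mul_of_nonneg_left (hzt j) (hA i₀ j)
      _ = r * (t * x i₀) := by
        rw [Matrix.mulVec_smul, hAx, Pi.smul_apply, Pi.smul_apply, smul_eq_mul, smul_eq_mul]
        ring
  exact le_of_mul_le_mul_right key (mul_pos ht (hx i₀))

theorem matSpecRad_eq_of_pos_eigenvector [Nonempty n] {A : Matrix n n ℝ}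
    (hA : ∀ i j, 0 ≤ A i j) {x : n → ℝ} (hx : ∀ i, 0 < x i) {r : ℝ} (hAx : A *ᵥ x = r • x) :
    matSpecRad A = r := by
  obtain ⟨i⟩ := ‹Nonempty n›
  have hr : 0 ≤ r := by
    have h := mulVec_nonneg hA (fun j => (hx j).le) i
    rw [hAx, Pi.smul_apply, smul_eq_mul] at h
    exact nonneg_of_mul_nonneg_left h (hx i)
  refine IsGreatest.csSup_eq ⟨⟨r, ?_, by simp [abs_of_nonneg hr]⟩, ?_⟩
  · refine (mem_spectrum_iff_exists_mulVec_eq_smul _ _).2 ⟨fun j => (x j : ℂ), ?_, ?_⟩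
    · exact fun h => (hx i).ne' (by simpa using congrFun h i)
    · ext j
      have h := RingHom.map_mulVec Complex.ofRealHom A x j
      rw [hAx] at h
      exact h.symm.trans (by simp)
  · rintro _ ⟨μ, hμ, rfl⟩
    obtain ⟨y, hy0, hy⟩ := (mem_spectrum_iff_exists_mulVec_eq_smul _ _).1 hμ
    obtain ⟨j, hj⟩ := Function.ne_iff.1 hy0
    refine le_of_smul_le_mulVec hA hx hAx (z := fun k => ‖y k‖) ⟨j, norm_pos_iff.2 hj⟩
      fun k => ?_
    calc ‖μ‖ * ‖y k‖ = ‖((A.map fun t : ℝ => (t : ℂ)) *ᵥ y) k‖ := by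
          rw [hy, Pi.smul_apply, smul_eq_mul, norm_mul]
      _ ≤ ∑ l, ‖(A k l : ℂ) * y l‖ := norm_sum_le _ _
      _ = (A *ᵥ fun l => ‖y l‖) k := by
        refine Finset.sum_congr rfl fun l _ => ?_
        simp [abs_of_nonneg (hA k l)]

theorem mem_compSpec_of_mulVec_eq_smul {A : Matrix n n ℝ} {x : n → ℝ} (hx0 : x ≠ 0)
    (hx : 0 ≤ x) {r : ℝ} (hAx : A *ᵥ x = r • x) : r ∈ compSpec A :=
  ⟨x, hx0, hx, by simp [hAx], by simp [hAx]⟩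

theorem zero_mem_compSpec {A : Matrix n n ℝ} (hA : ∀ i j, 0 ≤ A i j) {i : n}
    (hii : A i i = 0) : (0 : ℝ) ∈ compSpec A :=
  ⟨Pi.single i 1, by simp, Pi.single_nonneg.2 zero_le_one,
    by simpa using mulVec_nonneg hA (Pi.single_nonneg.2 zero_le_one), by simp [hii]⟩

theorem mulVec_apply_eq_of_dotProduct_eq_zero {A : Matrix n n ℝ} {x : n → ℝ} {r : ℝ}
    (hx : 0 ≤ x) (hslack : 0 ≤ A *ᵥ x - r • x) (hdot : x ⬝ᵥ (A *ᵥ x - r • x) = 0) {i : n}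
    (hi : x i ≠ 0) : (A *ᵥ x) i = r * x i := by
  have h := (Finset.sum_eq_zero_iff_of_nonneg fun j _ => mul_nonneg (hx j) (hslack j)).1 hdot i
    (Finset.mem_univ i)
  have := (mul_eq_zero.1 h).resolve_left hi
  simp only [Pi.sub_apply, Pi.smul_apply, smul_eq_mul] at this
  linarith

end NonnegMatrix

theorem eq_one_of_forall_exists_eq_mul {V : Type*} [Finite V] {x : V → ℝ} {r : ℝ} (hr : 0 < r)
    {u₀ : V} (hu₀ : x u₀ ≠ 0) (h : ∀ u, x u ≠ 0 → ∃ w, x w = r * x u) : r = 1 := by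
  choose! f hf using h
  have hiter : ∀ k, x (f^[k] u₀) = r ^ k * x u₀ := by
    intro k
    induction k with
    | zero => simp
    | succ k ih =>
      rw [Function.iterate_succ_apply', hf _ (by rw [ih]; exact mul_ne_zero (by positivity) hu₀),
        ih, pow_succ]
      ring
  by_contra hr1
  refine not_injective_infinite_finite (fun k => f^[k] u₀) fun k l hkl => ?_
  apply pow_right_injective₀ hr hr1
  have := congrArg x hkl
  simp only [hiter] at this
  exact mul_right_cancel₀ hu₀ this

section Digraph

variable {V : Type*} {E : V → V → Prop}

theorem adjMat_nonneg (E : V → V → Prop) (i j : V) : 0 ≤ adjMat E i j := by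
  simp only [adjMat, Matrix.of_apply]
  split_ifs <;> norm_num

theorem StronglyConnected.forall_of_adj_imp {p : V → Prop} (hE : StronglyConnected E)
    (hp : ∀ u w, E u w → p u → p w) {u₀ : V} (hu₀ : p u₀) (u : V) : p u := by
  induction hE u₀ u with
  | refl => exact hu₀
  | tail _ huw ih => exact hp _ _ huw ih

variable [Fintype V]

theorem adjMat_mulVec_apply (x : V → ℝ) (u : V) :
    (adjMat E *ᵥ x) u = ∑ w ∈ Finset.univ.filter (E u), x w := by
  simp [adjMat, Matrix.mulVec, dotProduct, Finset.sum_filter]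

theorem adjMat_mulVec_apply_of_existsUnique (x : V → ℝ) {u w : V} (hw : E u w)
    (h : ∃! w, E u w) : (adjMat E *ᵥ x) u = x w := by
  rw [adjMat_mulVec_apply, Finset.sum_eq_single_of_mem w (by simpa using hw)]
  exact fun w' hw' hne => absurd (h.unique (by simpa using hw') hw) hne

theorem adjMat_mulVec_apply_of_adj_iff (x : V → ℝ) {u p q : V} (hpq : p ≠ q)
    (h : ∀ w, E u w ↔ w = p ∨ w = q) : (adjMat E *ᵥ x) u = x p + x q := by
  rw [adjMat_mulVec_apply, ← Finset.sum_pair hpq]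
  congr 1
  ext w
  simp [h]

theorem one_mem_compSpec_of_existsUnique_adj {S : Set V} (hS : S.Nonempty)
    (h : ∀ u ∈ S, ∃! w, w ∈ S ∧ E u w) : (1 : ℝ) ∈ compSpec (adjMat E) := by
  set x := S.indicator (1 : V → ℝ)
  have hx : 0 ≤ x := Set.indicator_nonneg fun _ _ => zero_le_one
  have hslack : ∀ u ∈ S, (adjMat E *ᵥ x - (1 : ℝ) • x) u = 0 := by
    intro u hu
    obtain ⟨w, ⟨hwS, huw⟩, huniq⟩ := h u hu
    rw [Pi.sub_apply, adjMat_mulVec_apply, Finset.sum_eq_single_of_mem w (by simpa using huw)]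
    · simp [x, hu, hwS]
    · intro w' hw' hne
      exact Set.indicator_of_notMem (fun hw'S => hne (huniq w' ⟨hw'S, by simpa using hw'⟩)) _
  obtain ⟨u₀, hu₀⟩ := hS
  refine ⟨x, fun h0 => by simpa [x, hu₀] using congrFun h0 u₀, hx, fun u => ?_, ?_⟩
  · by_cases hu : u ∈ S
    · exact (hslack u hu).ge
    · simpa [x, hu] using mulVec_nonneg (adjMat_nonneg E) hx u
  · refine Finset.sum_eq_zero fun u _ => ?_
    by_cases hu : u ∈ S
    · rw [hslack u hu, mul_zero]
    · simp [x, hu]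

theorem compSpec_subset_of_existsUnique_adj {v p q : V} (hpq : p ≠ q)
    (hv : ∀ w, E v w ↔ w = p ∨ w = q) (hout : ∀ u, u ≠ v → ∃! w, E u w)
    (hE : StronglyConnected E) : compSpec (adjMat E) ⊆ {0, 1, rho E} := by
  rintro r ⟨x, hx0, hx, hslack, hdot⟩
  have heq : ∀ u, x u ≠ 0 → (adjMat E *ᵥ x) u = r * x u :=
    fun u => mulVec_apply_eq_of_dotProduct_eq_zero hx hslack hdot
  obtain ⟨u₀, hu₀⟩ := Function.ne_iff.1 hx0
  have hr : 0 ≤ r := by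
    have h := mulVec_nonneg (adjMat_nonneg E) hx u₀
    rw [heq u₀ hu₀] at h
    exact nonneg_of_mul_nonneg_left h ((hx u₀).lt_of_ne' hu₀)
  rcases hr.eq_or_lt with rfl | hr
  · exact Or.inl rfl
  have hstep : ∀ u w, u ≠ v → E u w → x u ≠ 0 → x w = r * x u := fun u w hu huw hxu => by
    rw [← heq u hxu, adjMat_mulVec_apply_of_existsUnique x huw (hout u hu)]
  by_cases hclosed : ∀ u w, E u w → x u ≠ 0 → x w ≠ 0
  · have hpos : ∀ u, 0 < x u := fun u => (hx u).lt_of_ne' (hE.forall_of_adj_imp hclosed hu₀ u)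
    have : Nonempty V := ⟨u₀⟩
    exact Or.inr (Or.inr (matSpecRad_eq_of_pos_eigenvector (adjMat_nonneg E) hpos
      (funext fun u => heq u (hpos u).ne')).symm)
  · -- the support is left only at `v`, through one of `p`, `q`
    push Not at hclosed
    obtain ⟨u, w, huw, hxu, hxw⟩ := hclosed
    have hu : u = v := by
      by_contra hu
      exact mul_ne_zero hr.ne' hxu (hxw ▸ hstep u w hu huw hxu).symm
    subst hu
    refine Or.inr (Or.inl (eq_one_of_forall_exists_eq_mul hr hu₀ fun u' hxu' => ?_))
    by_cases hu' : u' = u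
    · subst hu'
      have hsum := heq u' hxu'
      rw [adjMat_mulVec_apply_of_adj_iff x hpq hv] at hsum
      rcases (hv w).1 huw with rfl | rfl
      · exact ⟨q, by rw [← hsum, hxw, zero_add]⟩
      · exact ⟨p, by rw [← hsum, hxw, add_zero]⟩
    · obtain ⟨w', hw', -⟩ := hout u' hu'
      exact ⟨w', hstep u' w' hu' hw' hxu'⟩

end Digraph

section Path

variable {V : Type*} {E : V → V → Prop} {m : ℕ} {X : Fin (m + 1) → V}

theorem reach_zero_of_path (hX : ∀ i : Fin m, E (X i.castSucc) (X i.succ)) (i : Fin (m + 1)) :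
    Reach E (X 0) (X i) :=
  Fin.induction Relation.ReflTransGen.refl (fun j ih => ih.tail (hX j)) i

theorem reach_last_of_path (hX : ∀ i : Fin m, E (X i.castSucc) (X i.succ)) (i : Fin (m + 1)) :
    Reach E (X i) (X (Fin.last m)) :=
  Fin.reverseInduction Relation.ReflTransGen.refl (fun j ih => ih.head (hX j)) i

end Path

theorem exists_one_lt_pow_eq_pow_add_pow (a b c : ℕ) :
    ∃ r : ℝ, 1 < r ∧ r ^ (a + b + c + 2) = r ^ a + r ^ b := by
  set f : ℝ → ℝ := fun t => t ^ (a + b + c + 2) - t ^ a - t ^ b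
  have hf : ContinuousOn f (Set.Icc 1 2) := by fun_prop
  have h2 : (0 : ℝ) ≤ f 2 := by
    have ha : (2 : ℝ) ^ a ≤ 2 ^ (a + b + c + 1) := pow_le_pow_right₀ one_le_two (by omega)
    have hb : (2 : ℝ) ^ b ≤ 2 ^ (a + b + c + 1) := pow_le_pow_right₀ one_le_two (by omega)
    simp only [f, pow_succ _ (a + b + c + 1)]
    linarith
  obtain ⟨r, hr, hfr⟩ := intermediate_value_Icc one_le_two hf ⟨by norm_num [f], h2⟩
  refine ⟨r, hr.1.lt_of_ne ?_, by simp only [f] at hfr; linarith⟩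
  rintro rfl
  norm_num [f] at hfr

/-- The witnesses of `IsThetaDigraph E a b c` as named fields; `P 0` is the vertex `v` and `R 0`
the vertex `w`. -/
structure ThetaPaths {V : Type*} (E : V → V → Prop) (a b c : ℕ) where
  P : Fin (a + 2) → V
  Q : Fin (b + 2) → V
  R : Fin (c + 2) → V
  injective_P : Function.Injective P
  injective_Q : Function.Injective Q
  injective_R : Function.Injective R
  P_zero : P 0 = Q 0
  Q_zero : Q 0 = R (Fin.last (c + 1))
  P_last : P (Fin.last (a + 1)) = Q (Fin.last (b + 1))
  Q_last : Q (Fin.last (b + 1)) = R 0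
  P_eq_Q : ∀ i j, P i = Q j → (i = 0 ∧ j = 0) ∨ (i = Fin.last (a + 1) ∧ j = Fin.last (b + 1))
  P_eq_R : ∀ i j, P i = R j → (i = 0 ∧ j = Fin.last (c + 1)) ∨ (i = Fin.last (a + 1) ∧ j = 0)
  Q_eq_R : ∀ i j, Q i = R j → (i = 0 ∧ j = Fin.last (c + 1)) ∨ (i = Fin.last (b + 1) ∧ j = 0)
  cover : Set.range P ∪ Set.range Q ∪ Set.range R = Set.univ
  adj_iff : ∀ u w, E u w ↔
    ((∃ i : Fin (a + 1), u = P i.castSucc ∧ w = P i.succ) ∨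
     (∃ i : Fin (b + 1), u = Q i.castSucc ∧ w = Q i.succ) ∨
     (∃ i : Fin (c + 1), u = R i.castSucc ∧ w = R i.succ))

theorem IsThetaDigraph.nonempty_thetaPaths {V : Type*} {E : V → V → Prop} {a b c : ℕ}
    (h : IsThetaDigraph E a b c) : Nonempty (ThetaPaths E a b c) := by
  obtain ⟨P, Q, R, h₁, h₂, h₃, h₄, h₅, h₆, h₇, h₈, h₉, h₁₀, h₁₁, h₁₂⟩ := h
  exact ⟨⟨P, Q, R, h₁, h₂, h₃, h₄, h₅, h₆, h₇, h₈, h₉, h₁₀, h₁₁, h₁₂⟩⟩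

theorem Fin.one_ne_last_of_pos {n : ℕ} (hn : 0 < n) : (1 : Fin (n + 2)) ≠ Fin.last (n + 1) := by
  rw [Ne, Fin.ext_iff, Fin.val_one, Fin.val_last]
  omega

namespace ThetaPaths

variable {V : Type*} {E : V → V → Prop} {a b c : ℕ} (T : ThetaPaths E a b c)

theorem mem_range (u : V) : u ∈ Set.range T.P ∪ Set.range T.Q ∪ Set.range T.R :=
  T.cover ▸ Set.mem_univ u

theorem R_last : T.R (Fin.last (c + 1)) = T.P 0 := (T.P_zero.trans T.Q_zero).symm

theorem P_last_eq_R_zero : T.P (Fin.last (a + 1)) = T.R 0 := T.P_last.trans T.Q_last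

theorem adj_P (i : Fin (a + 1)) : E (T.P i.castSucc) (T.P i.succ) :=
  (T.adj_iff _ _).2 (Or.inl ⟨i, rfl, rfl⟩)

theorem adj_Q (i : Fin (b + 1)) : E (T.Q i.castSucc) (T.Q i.succ) :=
  (T.adj_iff _ _).2 (Or.inr (Or.inl ⟨i, rfl, rfl⟩))

theorem adj_R (i : Fin (c + 1)) : E (T.R i.castSucc) (T.R i.succ) :=
  (T.adj_iff _ _).2 (Or.inr (Or.inr ⟨i, rfl, rfl⟩))

theorem reach_from_P_zero (u : V) : Reach E (T.P 0) u := by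
  have hR : ∀ j, Reach E (T.P 0) (T.R j) := fun j =>
    (reach_zero_of_path T.adj_P _).trans (T.P_last_eq_R_zero ▸ reach_zero_of_path T.adj_R j)
  obtain (⟨i, rfl⟩ | ⟨i, rfl⟩) | ⟨j, rfl⟩ := T.mem_range u
  · exact reach_zero_of_path T.adj_P i
  · exact T.P_zero ▸ reach_zero_of_path T.adj_Q i
  · exact hR j

theorem reach_to_P_zero (u : V) : Reach E u (T.P 0) := by
  have hR : ∀ j, Reach E (T.R j) (T.P 0) := fun j => T.R_last ▸ reach_last_of_path T.adj_R j
  obtain (⟨i, rfl⟩ | ⟨i, rfl⟩) | ⟨j, rfl⟩ := T.mem_range u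
  · exact (reach_last_of_path T.adj_P i).trans (T.P_last_eq_R_zero ▸ hR 0)
  · exact (reach_last_of_path T.adj_Q i).trans (T.Q_last ▸ hR 0)
  · exact hR j

theorem stronglyConnected (T : ThetaPaths E a b c) : StronglyConnected E :=
  fun u w => (T.reach_to_P_zero u).trans (T.reach_from_P_zero w)

theorem adj_P_zero_iff (w : V) : E (T.P 0) w ↔ w = T.P 1 ∨ w = T.Q 1 := by
  rw [T.adj_iff]
  constructor
  · rintro (⟨i, hi, rfl⟩ | ⟨i, hi, rfl⟩ | ⟨i, hi, rfl⟩)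
    · obtain rfl : i = 0 := Fin.castSucc_eq_zero_iff.1 (T.injective_P hi).symm
      exact Or.inl rfl
    · obtain rfl : i = 0 := Fin.castSucc_eq_zero_iff.1 (T.injective_Q (T.P_zero.symm.trans hi)).symm
      exact Or.inr rfl
    · exact absurd (T.injective_R (T.R_last.trans hi)) (Fin.castSucc_ne_last i).symm
  · rintro (rfl | rfl)
    · exact Or.inl ⟨0, rfl, rfl⟩
    · exact Or.inr (Or.inl ⟨0, T.P_zero, rfl⟩)

theorem not_adj_P_zero_self : ¬ E (T.P 0) (T.P 0) := by
  rw [T.adj_P_zero_iff]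
  rintro (h | h)
  · exact zero_ne_one (T.injective_P h)
  · exact zero_ne_one (T.injective_Q (T.P_zero.symm.trans h))

theorem Q_one_notMem (hb : 0 < b) : T.Q 1 ∉ Set.range T.P ∪ Set.range T.R := by
  rintro (⟨i, hi⟩ | ⟨j, hj⟩)
  · rcases T.P_eq_Q i 1 hi with ⟨-, h⟩ | ⟨-, h⟩
    · exact one_ne_zero h
    · exact Fin.one_ne_last_of_pos hb h
  · rcases T.Q_eq_R 1 j hj.symm with ⟨h, -⟩ | ⟨h, -⟩
    · exact one_ne_zero h
    · exact Fin.one_ne_last_of_pos hb h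

theorem P_one_ne_Q_one (hb : 0 < b) : T.P 1 ≠ T.Q 1 :=
  fun h => T.Q_one_notMem hb (Or.inl ⟨1, h⟩)

theorem Q_castSucc_eq_P_zero_of_eq_P {i : Fin (b + 1)} {k : Fin (a + 2)}
    (h : T.Q i.castSucc = T.P k) : T.Q i.castSucc = T.P 0 := by
  rcases T.P_eq_Q k _ h.symm with ⟨-, hi⟩ | ⟨-, hi⟩
  · rw [hi, T.P_zero]
  · exact absurd hi (Fin.castSucc_ne_last i)

theorem P_castSucc_eq_P_zero_of_eq_R {i : Fin (a + 1)} {k : Fin (c + 2)}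
    (h : T.P i.castSucc = T.R k) : T.P i.castSucc = T.P 0 := by
  rcases T.P_eq_R _ k h with ⟨hi, -⟩ | ⟨hi, -⟩
  · rw [hi]
  · exact absurd hi (Fin.castSucc_ne_last i)

theorem Q_castSucc_eq_P_zero_of_eq_R {i : Fin (b + 1)} {k : Fin (c + 2)}
    (h : T.Q i.castSucc = T.R k) : T.Q i.castSucc = T.P 0 := by
  rcases T.Q_eq_R _ k h with ⟨hi, -⟩ | ⟨hi, -⟩
  · rw [hi, T.P_zero]
  · exact absurd hi (Fin.castSucc_ne_last i)

theorem eq_of_adj_of_adj {u w₁ w₂ : V} (hu : u ≠ T.P 0) (h₁ : E u w₁) (h₂ : E u w₂) :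
    w₁ = w₂ := by
  rw [T.adj_iff] at h₁ h₂
  rcases h₁ with ⟨i, rfl, rfl⟩ | ⟨i, rfl, rfl⟩ | ⟨i, rfl, rfl⟩ <;>
    rcases h₂ with ⟨j, hj, rfl⟩ | ⟨j, hj, rfl⟩ | ⟨j, hj, rfl⟩
  · rw [Fin.castSucc_injective _ (T.injective_P hj)]
  · exact absurd (T.Q_castSucc_eq_P_zero_of_eq_P hj.symm) (hj ▸ hu)
  · exact absurd (T.P_castSucc_eq_P_zero_of_eq_R hj) hu
  · exact absurd (T.Q_castSucc_eq_P_zero_of_eq_P hj) hu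
  · rw [Fin.castSucc_injective _ (T.injective_Q hj)]
  · exact absurd (T.Q_castSucc_eq_P_zero_of_eq_R hj) hu
  · exact absurd (T.P_castSucc_eq_P_zero_of_eq_R hj.symm) (hj ▸ hu)
  · exact absurd (T.Q_castSucc_eq_P_zero_of_eq_R hj.symm) (hj ▸ hu)
  · rw [Fin.castSucc_injective _ (T.injective_R hj)]

theorem exists_adj (T : ThetaPaths E a b c) (u : V) : ∃ w, E u w := by
  obtain (⟨i, rfl⟩ | ⟨i, rfl⟩) | ⟨j, rfl⟩ := T.mem_range u
  · rcases Fin.eq_castSucc_or_eq_last i with ⟨i, rfl⟩ | rfl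
    · exact ⟨_, T.adj_P i⟩
    · exact ⟨_, T.P_last_eq_R_zero ▸ T.adj_R 0⟩
  · rcases Fin.eq_castSucc_or_eq_last i with ⟨i, rfl⟩ | rfl
    · exact ⟨_, T.adj_Q i⟩
    · exact ⟨_, T.Q_last ▸ T.adj_R 0⟩
  · rcases Fin.eq_castSucc_or_eq_last j with ⟨j, rfl⟩ | rfl
    · exact ⟨_, T.adj_R j⟩
    · exact ⟨_, T.R_last ▸ T.adj_P 0⟩

theorem existsUnique_adj {u : V} (hu : u ≠ T.P 0) : ∃! w, E u w :=
  let ⟨w, hw⟩ := T.exists_adj u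
  ⟨w, hw, fun _ hw' => T.eq_of_adj_of_adj hu hw' hw⟩

theorem adj_mem_P_or_R {u w : V} (hu : u ∈ Set.range T.P ∪ Set.range T.R) (hu₀ : u ≠ T.P 0)
    (huw : E u w) : w ∈ Set.range T.P ∪ Set.range T.R := by
  rcases (T.adj_iff u w).1 huw with ⟨i, -, rfl⟩ | ⟨i, rfl, -⟩ | ⟨i, -, rfl⟩
  · exact Or.inl ⟨_, rfl⟩
  · rcases hu with ⟨k, hk⟩ | ⟨k, hk⟩
    · exact absurd (T.Q_castSucc_eq_P_zero_of_eq_P hk.symm) hu₀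
    · exact absurd (T.Q_castSucc_eq_P_zero_of_eq_R hk.symm) hu₀
  · exact Or.inr ⟨_, rfl⟩

theorem one_mem_compSpec [Fintype V] (T : ThetaPaths E a b c) (hb : 0 < b) : (1 : ℝ) ∈ compSpec (adjMat E) := by
  refine one_mem_compSpec_of_existsUnique_adj (S := Set.range T.P ∪ Set.range T.R)
    ⟨T.P 0, Or.inl ⟨0, rfl⟩⟩ fun u hu => ?_
  by_cases hu₀ : u = T.P 0
  · subst hu₀
    refine ⟨T.P 1, ⟨Or.inl ⟨1, rfl⟩, (T.adj_P_zero_iff _).2 (Or.inl rfl)⟩, ?_⟩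
    rintro w ⟨hwS, hw⟩
    rcases (T.adj_P_zero_iff w).1 hw with rfl | rfl
    · rfl
    · exact absurd hwS (T.Q_one_notMem hb)
  · obtain ⟨w, hw, huniq⟩ := T.existsUnique_adj hu₀
    exact ⟨w, ⟨T.adj_mem_P_or_R hu hu₀ hw, hw⟩, fun w' hw' => huniq w' hw'.2⟩

/-- `R` is tested first: at `P 0 = Q 0 = R (Fin.last _)` the formulas for `P` and `Q` do not
apply. -/
def perronVec (r : ℝ) (u : V) : ℝ :=
  if h : ∃ j, T.R j = u then r ^ (a + b + 1 + (h.choose : ℕ))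
  else if h : ∃ i, T.P i = u then r ^ (b + (h.choose : ℕ))
  else if h : ∃ i, T.Q i = u then r ^ (a + (h.choose : ℕ))
  else 0

variable {T}

theorem perronVec_R (r : ℝ) (j : Fin (c + 2)) : T.perronVec r (T.R j) = r ^ (a + b + 1 + j) := by
  have h : ∃ j', T.R j' = T.R j := ⟨j, rfl⟩
  rw [perronVec, dif_pos h, T.injective_R h.choose_spec]

theorem perronVec_P_zero (r : ℝ) : T.perronVec r (T.P 0) = r ^ (a + b + c + 2) := by
  rw [← T.R_last, perronVec_R, Fin.val_last]
  ring_nf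

theorem perronVec_P (r : ℝ) {i : Fin (a + 2)} (hi : i ≠ 0) :
    T.perronVec r (T.P i) = r ^ (b + i) := by
  rcases Fin.eq_castSucc_or_eq_last i with ⟨i, rfl⟩ | rfl
  · have hR : ¬ ∃ j, T.R j = T.P i.castSucc :=
      fun ⟨_, hj⟩ => hi (T.injective_P (T.P_castSucc_eq_P_zero_of_eq_R hj.symm))
    have hP : ∃ i', T.P i' = T.P i.castSucc := ⟨_, rfl⟩
    rw [perronVec, dif_neg hR, dif_pos hP, T.injective_P hP.choose_spec]
  · rw [T.P_last_eq_R_zero, perronVec_R, Fin.val_zero, Fin.val_last]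
    ring_nf

theorem perronVec_Q (r : ℝ) {i : Fin (b + 2)} (hi : i ≠ 0) :
    T.perronVec r (T.Q i) = r ^ (a + i) := by
  rcases Fin.eq_castSucc_or_eq_last i with ⟨i, rfl⟩ | rfl
  · have hR : ¬ ∃ j, T.R j = T.Q i.castSucc := fun ⟨_, hj⟩ =>
      hi (T.injective_Q ((T.Q_castSucc_eq_P_zero_of_eq_R hj.symm).trans T.P_zero))
    have hP : ¬ ∃ k, T.P k = T.Q i.castSucc := fun ⟨_, hk⟩ =>
      hi (T.injective_Q ((T.Q_castSucc_eq_P_zero_of_eq_P hk.symm).trans T.P_zero))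
    have hQ : ∃ i', T.Q i' = T.Q i.castSucc := ⟨_, rfl⟩
    rw [perronVec, dif_neg hR, dif_neg hP, dif_pos hQ, T.injective_Q hQ.choose_spec]
  · rw [T.Q_last, perronVec_R, Fin.val_zero, Fin.val_last]
    ring_nf

theorem perronVec_pos {r : ℝ} (hr : 0 < r) (u : V) : 0 < T.perronVec r u := by
  rw [perronVec]
  split_ifs with hR hP hQ
  any_goals positivity
  rcases T.mem_range u with (h | h) | h <;> contradiction

theorem perronVec_adj (r : ℝ) {u w : V} (hu : u ≠ T.P 0) (huw : E u w) :
    T.perronVec r w = r * T.perronVec r u := by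
  rcases (T.adj_iff u w).1 huw with ⟨i, rfl, rfl⟩ | ⟨i, rfl, rfl⟩ | ⟨i, rfl, rfl⟩
  · have hi : i.castSucc ≠ 0 := fun h => hu (by rw [h])
    rw [perronVec_P r hi, perronVec_P r i.succ_ne_zero, Fin.val_castSucc, Fin.val_succ]
    ring
  · have hi : i.castSucc ≠ 0 := fun h => hu (by rw [h, T.P_zero])
    rw [perronVec_Q r hi, perronVec_Q r i.succ_ne_zero, Fin.val_castSucc, Fin.val_succ]
    ring
  · rw [perronVec_R, perronVec_R, Fin.val_castSucc, Fin.val_succ]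
    ring

theorem mulVec_perronVec [Fintype V] (hb : 0 < b) {r : ℝ}
    (hr : r ^ (a + b + c + 2) = r ^ a + r ^ b) :
    adjMat E *ᵥ T.perronVec r = r • T.perronVec r := by
  funext u
  rw [Pi.smul_apply, smul_eq_mul]
  by_cases hu : u = T.P 0
  · subst hu
    rw [adjMat_mulVec_apply_of_adj_iff _ (T.P_one_ne_Q_one hb) T.adj_P_zero_iff,
      perronVec_P_zero, perronVec_P r one_ne_zero, perronVec_Q r one_ne_zero, Fin.val_one,
      Fin.val_one, hr]
    ring
  · obtain ⟨w, huw⟩ := T.exists_adj u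
    rw [adjMat_mulVec_apply_of_existsUnique _ huw (T.existsUnique_adj hu)]
    exact perronVec_adj r hu huw

end ThetaPaths

theorem stmt15_general {V : Type*} [Fintype V] (E : V → V → Prop) (a b c : ℕ)
    (hb : 0 < b) (h : IsThetaDigraph E a b c) :
    compSpec (adjMat E) = {0, 1, rho E} ∧ 1 < rho E ∧
      (compSpec (adjMat E)).ncard = 3 := by
  obtain ⟨T⟩ := h.nonempty_thetaPaths
  have : Nonempty V := ⟨T.P 0⟩
  obtain ⟨r, hr, hroot⟩ := exists_one_lt_pow_eq_pow_add_pow a b c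
  have hxpos := T.perronVec_pos (one_pos.trans hr)
  have hx := T.mulVec_perronVec hb hroot
  have hρ : rho E = r := matSpecRad_eq_of_pos_eigenvector (adjMat_nonneg E) hxpos hx
  have hspec : compSpec (adjMat E) = {0, 1, rho E} := by
    refine (compSpec_subset_of_existsUnique_adj (T.P_one_ne_Q_one hb) T.adj_P_zero_iff
      (fun _ => T.existsUnique_adj) T.stronglyConnected).antisymm ?_
    rintro _ (rfl | rfl | rfl)
    · exact zero_mem_compSpec (adjMat_nonneg E) (i := T.P 0)
        (by simp [adjMat, T.not_adj_P_zero_self])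
    · exact T.one_mem_compSpec hb
    · exact hρ ▸ mem_compSpec_of_mulVec_eq_smul (fun h0 => (hxpos (T.P 0)).ne' (congrFun h0 _))
        (fun u => (hxpos u).le) hx
  refine ⟨hspec, hρ ▸ hr, ?_⟩
  rw [hspec, hρ]
  exact Set.ncard_eq_three.2 ⟨0, 1, r, zero_ne_one, by linarith, hr.ne, rfl⟩

/-- the `θ(a,b,c)` digraph has complementarity spectrum `{0, 1, ρ}` with
`ρ > 1`, hence exactly three complementarity eigenvalues. -/
theorem stmt15 {V : Type*} [Fintype V] (E : V → V → Prop) (a b c : ℕ)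
    (hab : a ≤ b) (hb : 0 < b) (h : IsThetaDigraph E a b c) :
    compSpec (adjMat E) = {0, 1, rho E} ∧ 1 < rho E ∧
      (compSpec (adjMat E)).ncard = 3 :=
  stmt15_general E a b c hb h
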